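/- Let n ≥ 1, and let β_0,…,β_n and γ_0,…,γ_{n-1} be elements of 𝔊 such that the operator identity (T_i − 1)∘(Σ_{k=0}^n (β_k·)∘T_j^k) = Σ_{k=0}^{n-1} (γ_k·)∘T_j^k∘L holds on 𝔊. If H_0,…,H_{n-2} are nowhere zero and H_{n-1} is identically zero, then Σ_{k=0}^n (β_k·)∘T_j^k = (β_n·)∘B_{n-1} as operators on 𝔊. -/

import Mathlib

/-!
Discrete (quad-graph) setting: the space `𝔊` is modelled by `QG = ℤ → ℤ → ℝ`
(functions `φ(i,j)`), with the shifts `Ti`, `Tj`, their inverses, and the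
`k`-fold shifts `TiZ k`, `TjZ k`.  For `g : QG`, pointwise multiplication
`g * φ` models the operator `g·`.
-/

/-- The function space `𝔊` of functions `ℤ² → ℝ`. -/
abbrev QG : Type := ℤ → ℤ → ℝ

namespace QG

noncomputable section

/-- The shift operator `T_i(φ)(i,j) = φ(i+1,j)`. -/
def Ti (φ : QG) : QG := fun i j => φ (i + 1) j

/-- The shift operator `T_j(φ)(i,j) = φ(i,j+1)`. -/
def Tj (φ : QG) : QG := fun i j => φ i (j + 1)

/-- The `k`-fold shift in `i`. -/
def TiZ (k : ℤ) (φ : QG) : QG := fun i j => φ (i + k) j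

/-- The `k`-fold shift in `j`. -/
def TjZ (k : ℤ) (φ : QG) : QG := fun i j => φ i (j + k)

/-- The inverse shift `T_i⁻¹`. -/
def TiInv (φ : QG) : QG := fun i j => φ (i - 1) j

/-- The inverse shift `T_j⁻¹`. -/
def TjInv (φ : QG) : QG := fun i j => φ i (j - 1)

/-- A function that is nowhere zero. -/
def NowhereZero (φ : QG) : Prop := ∀ i j, φ i j ≠ 0

/-- The linearization operator `L = T_i∘T_j − a·T_i − b·T_j − c·`. -/
def L (a b c : QG) (φ : QG) : QG := Ti (Tj φ) - a * Ti φ - b * Tj φ - c * φ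

/-- The pair `(b_k, H_k)` of the Laplace j-transformations:
`b_0 = a`, `H_0 = c + b·T_i⁻¹(a)`,
`b_{k+1} = T_i⁻¹(b_k)·T_j(H_k)/H_k`,
`H_{k+1} = T_j(H_k) − T_j^k(b)·b_{k+1} + T_j^{k+1}(b)·T_i⁻¹(b_{k+1})`. -/
def bH (a b c : QG) : ℕ → QG × QG
  | 0 => (a, c + b * TiInv a)
  | k + 1 =>
      let bk := TiInv (bH a b c k).1 * Tj (bH a b c k).2 / (bH a b c k).2
      (bk, Tj (bH a b c k).2 - TjZ (k : ℤ) b * bk + TjZ ((k : ℤ) + 1) b * TiInv bk)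

/-- The function `b_k`. -/
def bj (a b c : QG) (k : ℕ) : QG := (bH a b c k).1

/-- The Laplace j-invariant `H_k`. -/
def Hj (a b c : QG) (k : ℕ) : QG := (bH a b c k).2

/-- The operator `L_k`: `L_0 = L` and
`L_k = (T_i − T_j^k(b)·)∘(T_j − T_i⁻¹(b_k)·) − H_k·` for `k ≥ 1`. -/
def Lk (a b c : QG) : ℕ → QG → QG
  | 0, φ => L a b c φ
  | k + 1, φ =>
      Ti (Tj φ - TiInv (bj a b c (k + 1)) * φ)
        - TjZ ((k : ℤ) + 1) b * (Tj φ - TiInv (bj a b c (k + 1)) * φ)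
        - Hj a b c (k + 1) * φ

/-- `Bo (k+1)` is the operator `B_k = (T_j − T_i⁻¹(b_k)·)∘B_{k-1}`; `Bo 0 = id` is `B_{-1}`. -/
def Bo (a b c : QG) : ℕ → QG → QG
  | 0, φ => φ
  | k + 1, φ => Tj (Bo a b c k φ) - TiInv (bj a b c k) * Bo a b c k φ

/-- `Bbar k` is the operator `B̄_k`: `B̄_0 = id`, `B̄_k = (T_j − b_k·)∘B̄_{k-1}`. -/
def Bbar (a b c : QG) : ℕ → QG → QG
  | 0, φ => φ
  | k + 1, φ => Tj (Bbar a b c k φ) - bj a b c (k + 1) * Bbar a b c k φ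

/-- `Rchain p` is the composition
`((1/H_0)·)∘(T_i − b·)∘((1/H_1)·)∘(T_i − T_j(b)·)∘···∘((1/H_{p-1})·)∘(T_i − T_j^{p-1}(b)·)`
(the identity for `p = 0`). -/
def Rchain (a b c : QG) : ℕ → QG → QG
  | 0, φ => φ
  | k + 1, φ => Rchain a b c k ((1 / Hj a b c k) * (Ti φ - TjZ (k : ℤ) b * φ))

end

/-!
Write `D = Σ β_k T_j^k` and `M = Σ γ_k T_j^k`. Comparing the coefficients of `T_i T_j^m` in
`(T_i − 1) ∘ D = M ∘ L` shows that `D = D' ∘ (T_j − T_i⁻¹(a)·)`, where `D'` has degree one less and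
coefficients `T_i⁻¹(γ_m)`. Comparing the coefficients of `T_j^m` and dividing by `H_0` then shows
that `D'` satisfies a relation of the same kind with `L` replaced by its Laplace transform, whose
invariant is `H_1`. Iterating while `H_k` is nowhere zero splits off the factors of `B_{n-1}` one
at a time, and the leading coefficient `β_n` is carried along unchanged.
-/

open Finset

def truncate {M : Type*} [Zero M] (f : ℕ → M) (K : ℕ) (m : ℤ) : M :=
  if 0 ≤ m ∧ m < K then f m.toNat else 0

lemma truncate_natCast {M : Type*} [Zero M] (f : ℕ → M) {K k : ℕ} (hk : k < K) :
    truncate f K k = f k := by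
  simp [truncate, hk]

lemma truncate_apply (f : ℕ → QG) (K : ℕ) (m i j : ℤ) :
    truncate f K m i j = truncate (fun k => f k i j) K m := by
  unfold truncate; split_ifs <;> rfl

lemma truncate_mul_natCast {M : Type*} [MulZeroClass M] (f : ℕ → M) (u : ℤ → M) (K : ℕ)
    (m : ℤ) :
    truncate (fun k => f k * u k) K m = truncate f K m * u m := by
  unfold truncate; split_ifs with h
  · dsimp only; rw [Int.toNat_of_nonneg h.1]
  · rw [zero_mul]

lemma sum_range_ite_natCast_eq {M : Type*} [AddCommMonoid M] (K : ℕ) (f : ℕ → M) (m : ℤ) :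
    ∑ k ∈ range K, (if (k : ℤ) = m then f k else 0) = truncate f K m := by
  rcases lt_or_ge m 0 with hm | hm
  · rw [truncate, if_neg (by omega)]
    exact sum_eq_zero fun k _ => if_neg (by omega)
  · lift m to ℕ using hm
    simp [truncate, Finset.sum_ite_eq']

/-- Coefficientwise form of the operator identity
`(T_i − 1) ∘ Σ_{m=0}^{N} (e_m·) ∘ T_j^m`
  `= Σ_{m=0}^{N-1} (g_m·) ∘ T_j^m ∘ ((T_i − q·) ∘ (T_j − T_i⁻¹(p)·) − H·)`:
the coefficients of `T_i T_j^m` and of `T_j^m` agree, `g` being zero outside `[0, N)`. -/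
structure IsJIntegral (p q H : QG) (N : ℕ) (e g : ℤ → QG) : Prop where
  eq_zero_of_neg : ∀ m < 0, g m = 0
  eq_zero_of_ge : ∀ m, (N : ℤ) ≤ m → g m = 0
  Ti_coeff : ∀ m, Ti (e m) = g (m - 1) - g m * TjZ m p
  coeff : ∀ m, e m = g (m - 1) * TjZ (m - 1) q + g m * TjZ m (H - q * TiInv p)

lemma add_natCast_add_one_eq_add_iff (j m : ℤ) (k : ℕ) :
    j + k + 1 = j + m ↔ (k : ℤ) = m - 1 := by
  omega

theorem isJIntegral_truncate {p q r : QG} {N : ℕ} {e g : ℕ → QG}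
    (h : ∀ φ : QG, Ti (∑ k ∈ range (N + 1), e k * TjZ (k : ℤ) φ)
          - ∑ k ∈ range (N + 1), e k * TjZ (k : ℤ) φ
        = ∑ k ∈ range N, g k * TjZ (k : ℤ) (L p q r φ)) :
    IsJIntegral p q (r + q * TiInv p) N (truncate e (N + 1)) (truncate g N) where
  eq_zero_of_neg m hm := if_neg (by omega)
  eq_zero_of_ge m hm := if_neg (by omega)
  Ti_coeff m := by
    ext i j
    have := congrFun (congrFun (h fun x y => if x = i + 1 ∧ y = j + m then 1 else 0) i) j
    simp only [L, Ti, Tj, TjZ, Pi.sub_apply, Pi.mul_apply, Finset.sum_apply, add_right_inj,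
      left_eq_add, one_ne_zero, true_and, false_and, ↓reduceIte, mul_ite, mul_one, mul_zero,
      sum_const_zero, sub_zero, add_natCast_add_one_eq_add_iff, mul_sub, sum_sub_distrib,
      sum_range_ite_natCast_eq] at this
    rw [truncate_mul_natCast (fun k => g k i j) (fun y => p i (j + y))] at this
    simpa only [Ti, truncate_apply, Pi.sub_apply, Pi.mul_apply, TjZ] using this
  coeff m := by
    ext i j
    have := congrFun (congrFun (h fun x y => if x = i ∧ y = j + m then 1 else 0) i) j
    simp only [L, Ti, Tj, TjZ, Pi.sub_apply, Pi.mul_apply, Finset.sum_apply, add_right_inj,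
      add_eq_left, one_ne_zero, false_and, true_and, ↓reduceIte, mul_ite, mul_one, mul_zero,
      sum_const_zero, zero_sub, sub_self, add_natCast_add_one_eq_add_iff, mul_sub, mul_neg,
      sum_sub_distrib, sum_neg_distrib, sum_range_ite_natCast_eq] at this
    rw [truncate_mul_natCast (fun k => g k i j) (fun y => r i (j + y)),
      truncate_mul_natCast (fun k => g k i j) (fun y => q i (j + y))] at this
    simp only [Pi.add_apply, Pi.mul_apply, TjZ, truncate_apply, add_sub_cancel_right]
    linarith

def jOp (e : ℤ → QG) (N : ℕ) (φ : QG) : QG :=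
  ∑ m ∈ range (N + 1), e m * TjZ m φ

lemma jOp_apply (e : ℤ → QG) (N : ℕ) (φ : QG) (i j : ℤ) :
    jOp e N φ i j = ∑ m ∈ range (N + 1), e m i j * φ i (j + m) := by
  simp [jOp, Finset.sum_apply, TjZ]

/-- `laplaceB`, `laplaceH` are the recursion `bH` for `(b_{k+1}, H_{k+1})`, with a general `q` in
place of `T_j^k(b)`. -/
noncomputable def laplaceB (p H : QG) : QG := TiInv p * Tj H / H

noncomputable def laplaceH (p q H : QG) : QG :=
  Tj H - q * laplaceB p H + Tj q * TiInv (laplaceB p H)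

namespace IsJIntegral

variable {p q H : QG} {N : ℕ} {e g : ℤ → QG}

lemma coeff_apply (h : IsJIntegral p q H N e g) (m i j : ℤ) :
    e m i j = g (m - 1) (i - 1) j - g m (i - 1) j * p (i - 1) (j + m) := by
  simpa [Ti, TjZ] using congrFun (congrFun (h.Ti_coeff m) (i - 1)) j

lemma top_coeff (h : IsJIntegral p q H (N + 1) e g) : e (N + 1) = TiInv (g N) := by
  ext i j
  rw [h.coeff_apply, add_sub_cancel_right, h.eq_zero_of_ge (N + 1) (by push_cast; omega)]
  simp [TiInv]

lemma jOp_eq (h : IsJIntegral p q H (N + 1) e g) (φ : QG) :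
    jOp e (N + 1) φ = jOp (fun m => TiInv (g m)) N (Tj φ - TiInv p * φ) := by
  ext i j
  simp only [jOp_apply, h.coeff_apply, TiInv, Tj, Pi.sub_apply, Pi.mul_apply, sub_mul, mul_sub,
    sum_sub_distrib]
  rw [sum_range_succ', sum_range_succ _ (N + 1), h.eq_zero_of_neg ((0 : ℕ) - 1) (by omega),
    h.eq_zero_of_ge ((N + 1 : ℕ) : ℤ) le_rfl]
  simp only [Pi.zero_apply, zero_mul, add_zero, Nat.cast_add, Nat.cast_one,
    add_sub_cancel_right, add_assoc, mul_assoc]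

/-- `Y_m = T_i⁻¹(g_m) − g_m·T_j^m(q)` are the coefficients of the operator `Y` with
`(Σ g_m T_j^m) ∘ H· = Y ∘ (T_j − T_i⁻¹(p)·)`; the next multiplier is `Y ∘ (T_j(H)⁻¹·)`. -/
lemma quotient_coeff_sub_one (h : IsJIntegral p q H N e g) (m : ℤ) :
    TiInv (g (m - 1)) - g (m - 1) * TjZ (m - 1) q
      = (TiInv (g m) - g m * TjZ m q) * TjZ m (TiInv p) + g m * TjZ m H := by
  ext i j
  have hTi := h.coeff_apply m i j
  have hc := congrFun (congrFun (h.coeff m) i) j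
  simp only [TiInv, TjZ, Pi.sub_apply, Pi.add_apply, Pi.mul_apply] at hc ⊢
  linear_combination hc - hTi

theorem laplace (h : IsJIntegral p q H (N + 1) e g) (hH : NowhereZero H) :
    IsJIntegral (laplaceB p H) (Tj q) (laplaceH p q H) N (fun m => TiInv (g m))
      (fun m => (TiInv (g m) - g m * TjZ m q) / TjZ (m + 1) H) := by
  have hY : ∀ m, (N : ℤ) ≤ m → TiInv (g m) - g m * TjZ m q = 0 := by
    have hg : ∀ m, (N : ℤ) + 1 ≤ m → TiInv (g m) - g m * TjZ m q = 0 := fun m hm => by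
      rw [h.eq_zero_of_ge m (by push_cast; omega)]; ext; simp [TiInv]
    intro m hm
    rcases hm.lt_or_eq with hm | rfl
    · exact hg m hm
    · rw [← add_sub_cancel_right (N : ℤ) 1, h.quotient_coeff_sub_one, hg _ le_rfl,
        h.eq_zero_of_ge _ (by push_cast; omega)]
      simp
  refine ⟨fun m hm => ?_, fun m hm => ?_, fun m => ?_, fun m => ?_⟩
  · rw [h.eq_zero_of_neg m hm]; ext; simp [TiInv]
  · rw [hY m hm]; ext; simp
  · ext i j
    have hr := congrFun (congrFun (h.quotient_coeff_sub_one m) i) j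
    simp only [laplaceB, Ti, TiInv, Tj, TjZ, Pi.sub_apply, Pi.add_apply, Pi.mul_apply,
      Pi.div_apply, add_sub_cancel_right, sub_add_cancel, ← add_assoc] at hr ⊢
    have h0 := hH i (j + m)
    have h1 := hH i (j + m + 1)
    field_simp
    linear_combination -hr
  · ext i j
    have hr := congrFun (congrFun (h.quotient_coeff_sub_one m) i) j
    simp only [laplaceB, laplaceH, TiInv, Tj, TjZ, Pi.sub_apply, Pi.add_apply, Pi.mul_apply,
      Pi.div_apply, ← add_assoc, sub_add_cancel] at hr ⊢
    rw [show j + (m - 1) + 1 = j + m by ring]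
    have h0 := hH i (j + m)
    have h1 := hH i (j + m + 1)
    field_simp
    linear_combination (-q i (j + m) * H i (j + m + 1)) * hr

end IsJIntegral

lemma TjZ_zero (φ : QG) : TjZ 0 φ = φ := by
  ext i j; simp [TjZ]

lemma Tj_TjZ (k : ℤ) (φ : QG) : Tj (TjZ k φ) = TjZ (k + 1) φ := by
  ext i j; simp only [Tj, TjZ, add_right_comm, add_assoc]

lemma jOp_zero (e : ℤ → QG) (φ : QG) : jOp e 0 φ = e 0 * φ := by
  simp [jOp, TjZ_zero]

lemma bj_succ (a b c : QG) (s : ℕ) : bj a b c (s + 1) = laplaceB (bj a b c s) (Hj a b c s) := rfl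

lemma Hj_succ (a b c : QG) (s : ℕ) :
    Hj a b c (s + 1) = laplaceH (bj a b c s) (TjZ s b) (Hj a b c s) := by
  rw [laplaceH, Tj_TjZ, ← bj_succ]; rfl

theorem exists_isJIntegral_bj_Hj {a b c : QG} {n : ℕ} {e g : ℤ → QG}
    (h : IsJIntegral a b (Hj a b c 0) n e g) (hH : ∀ m, m + 1 < n → NowhereZero (Hj a b c m)) :
    ∀ s N, s + N + 1 = n → ∃ e' g',
      IsJIntegral (bj a b c s) (TjZ s b) (Hj a b c s) (N + 1) e' g' ∧ e' (N + 1) = e n ∧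
      ∀ φ, jOp e n φ = jOp e' (N + 1) (Bo a b c s φ) := by
  intro s
  induction s with
  | zero =>
    rintro N rfl
    rw [zero_add] at h ⊢
    refine ⟨e, g, ?_, rfl, fun φ => rfl⟩
    rw [Nat.cast_zero, TjZ_zero]
    exact h
  | succ s ih =>
    intro N hN
    obtain ⟨e', g', h', htop, hop⟩ := ih (N + 1) (by omega)
    have h'' := h'.laplace (hH s (by omega))
    rw [Tj_TjZ, ← bj_succ, ← Hj_succ, ← Nat.cast_succ] at h''
    refine ⟨_, _, h'', ?_, fun φ => ?_⟩
    · rw [← htop, h'.top_coeff]; push_cast; rfl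
    · rw [hop, h'.jOp_eq]; rfl

theorem statement14_general (a b c : QG) (n : ℕ) (β γ : ℕ → QG)
    (hJ : ∀ φ : QG,
      Ti (∑ k ∈ Finset.range (n + 1), β k * TjZ (k : ℤ) φ)
          - ∑ k ∈ Finset.range (n + 1), β k * TjZ (k : ℤ) φ
        = ∑ k ∈ Finset.range n, γ k * TjZ (k : ℤ) (L a b c φ))
    (hH : ∀ m, m + 1 < n → NowhereZero (Hj a b c m)) :
    ∀ φ : QG, ∑ k ∈ Finset.range (n + 1), β k * TjZ (k : ℤ) φ = β n * Bo a b c n φ := by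
  intro φ
  have hD : ∑ k ∈ range (n + 1), β k * TjZ (k : ℤ) φ = jOp (truncate β (n + 1)) n φ :=
    sum_congr rfl fun k hk => by rw [truncate_natCast β (mem_range.mp hk)]
  rw [hD, ← truncate_natCast β n.lt_succ_self]
  cases n with
  | zero => simp [jOp_zero, Bo]
  | succ s =>
    obtain ⟨e, g, h, htop, hop⟩ :=
      exists_isJIntegral_bj_Hj (isJIntegral_truncate hJ) hH s 0 rfl
    rw [hop, h.jOp_eq, jOp_zero, ← htop, h.top_coeff]
    rfl

/-- Let `n ≥ 1` and `β_0, …, β_n, γ_0, …, γ_{n-1} ∈ 𝔊` satisfy the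
formal j-integral relation `(T_i − 1)∘(Σ_{k=0}^n (β_k·)∘T_j^k) = Σ_{k=0}^{n-1} (γ_k·)∘T_j^k∘L`
on `𝔊`.  If `H_0, …, H_{n-2}` are nowhere zero and `H_{n-1} ≡ 0`, then
`Σ_{k=0}^n (β_k·)∘T_j^k = (β_n·)∘B_{n-1}` as operators on `𝔊`.
(Here `B_{n-1} = Bo n`.) -/
theorem statement14 (a b c : QG) (n : ℕ) (hn : 1 ≤ n) (β γ : ℕ → QG)
    (hJ : ∀ φ : QG,
      Ti (∑ k ∈ Finset.range (n + 1), β k * TjZ (k : ℤ) φ)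
          - ∑ k ∈ Finset.range (n + 1), β k * TjZ (k : ℤ) φ
        = ∑ k ∈ Finset.range n, γ k * TjZ (k : ℤ) (L a b c φ))
    (hH : ∀ m, m + 1 < n → NowhereZero (Hj a b c m))
    (hHn : Hj a b c (n - 1) = 0) :
    ∀ φ : QG, ∑ k ∈ Finset.range (n + 1), β k * TjZ (k : ℤ) φ = β n * Bo a b c n φ :=
  statement14_general a b c n β γ hJ hH

end QG
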